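/- arXiv:2308.01698 — 2 statements merged into one kernel-verified Lean document; each statement's English description precedes it below -/
import Mathlib

section
/- Let X and K be finite nonempty types, let π : K → ℝ be a prior with π_y > 0 for all y and Σ_{y∈K} π_y = 1, and let μ : K → X → ℝ be class-conditional probability mass functions with μ_y x > 0 for all y, x and Σ_{x∈X} μ_y x = 1. Define softmax(z)_y = exp(z_y) / Σ_{k∈K} exp(z_k). Suppose f : X → K → ℝ satisfies, for every x ∈ X and y ∈ K, softmax(f(x) + log π)_y = π_y μ_y x / Σ_{k∈K} π_k μ_k x. Then for every x ∈ X, a class y₀ maximizes f(x)_y over y ∈ K if and only if y₀ maximizes μ_y x over y ∈ K. -/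
open Finset

/-- The softmax function on a finite type. -/
noncomputable def softmax {K : Type*} [Fintype K] (z : K → ℝ) : K → ℝ :=
  fun y => Real.exp (z y) / ∑ k, Real.exp (z k)

/-- Key equivalence step in the proof of Lemma 1: if the prior-adjusted softmax
of a scorer `f` outputs the posterior `π_y μ_y(x)/Σ_k π_k μ_k(x)`, then the
maximizers of `f x` coincide with the maximizers of the class-conditional
likelihood `μ · x`. -/
theorem balanced_risk_argmax_equiv
    {X K : Type*} [Fintype X] [Fintype K] [Nonempty X] [Nonempty K]
    (π : K → ℝ) (hπ0 : ∀ y, 0 < π y) (hπ1 : ∑ y, π y = 1)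
    (μ : K → X → ℝ)
    (hμ0 : ∀ y x, 0 < μ y x) (hμ1 : ∀ y, ∑ x, μ y x = 1)
    (f : X → K → ℝ)
    (hf : ∀ x y, softmax (fun k => f x k + Real.log (π k)) y =
      π y * μ y x / ∑ k, π k * μ k x) :
    ∀ (x : X) (y₀ : K), (∀ y, f x y ≤ f x y₀) ↔ (∀ y, μ y x ≤ μ y₀ x) := by
  intro x y₀
  set S : ℝ := ∑ k, Real.exp (f x k + Real.log (π k)) with hS
  set T : ℝ := ∑ k, π k * μ k x with hT
  have hSpos : 0 < S := Finset.sum_pos (fun k _ => Real.exp_pos _) univ_nonempty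
  have hTpos : 0 < T := Finset.sum_pos (fun k _ => mul_pos (hπ0 k) (hμ0 k x)) univ_nonempty
  have key : ∀ y, Real.exp (f x y) = (S / T) * μ y x := by
    intro y
    have h := hf x y
    simp only [softmax] at h
    rw [show Real.exp (f x y + Real.log (π y)) = Real.exp (f x y) * π y from by
        rw [Real.exp_add, Real.exp_log (hπ0 y)]] at h
    rw [div_eq_div_iff hSpos.ne' hTpos.ne'] at h
    have h3 : π y * (Real.exp (f x y) * T) = π y * (μ y x * S) := by linear_combination h
    have h4 := mul_left_cancel₀ (hπ0 y).ne' h3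
    rw [div_mul_eq_mul_div, eq_div_iff hTpos.ne']
    linarith [h4]
  have hc : 0 < S / T := div_pos hSpos hTpos
  constructor
  · intro h y
    have := Real.exp_le_exp.mpr (h y)
    rw [key y, key y₀] at this
    exact le_of_mul_le_mul_left this hc
  · intro h y
    have : Real.exp (f x y) ≤ Real.exp (f x y₀) := by
      rw [key y, key y₀]
      exact mul_le_mul_of_nonneg_left (h y) hc.le
    exact Real.exp_le_exp.mp this
end

section
/- Let X and K be finite nonempty types, let π : K → ℝ be a prior with π_y > 0 for all y and Σ_{y∈K} π_y = 1, and let μ : K → X → ℝ be class-conditional probability mass functions with μ_y x > 0 for all y, x and Σ_{x∈X} μ_y x = 1. Define softmax(z)_y = exp(z_y) / Σ_{k∈K} exp(z_k), and define the balanced error of a classifier c : X → K as E_bal(c) = (1/|K|) Σ_{y∈K} Σ_{x∈X, c(x) ≠ y} μ_y x. Suppose f : X → K → ℝ satisfies, for every x ∈ X and y ∈ K, softmax(f(x) + log π)_y = π_y μ_y x / Σ_{k∈K} π_k μ_k x, and suppose c⋆ : X → K satisfies f(x)_{c⋆(x)} ≥ f(x)_y for every x ∈ X and y ∈ K. Then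 E_bal(c⋆) ≤ E_bal(c) for every classifier c : X → K. -/
/-!
Since `exp (z + log π) = π * exp z`, matching the posterior says exactly that `exp (f x ·)` is a
positive multiple of the likelihoods `μ · x`; hence the argmax `cstar x` of the scores maximises
`μ y x` over `y`. Swapping the sums, the balanced error of `c` is `1/|K|` times
`∑ x, (∑ y, μ y x - μ (c x) x)`, which is therefore smallest for `cstar`.
-/

open Finset

lemma softmax_add_log_apply {K : Type*} [Fintype K] (z w : K → ℝ) (hw : ∀ k, 0 < w k) (y : K) :
    softmax (fun k => z k + Real.log (w k)) y =
      Real.exp (z y) * w y / ∑ k, Real.exp (z k + Real.log (w k)) := by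
  rw [softmax, Real.exp_add, Real.exp_log (hw y)]

lemma softmax_pos {K : Type*} [Fintype K] (z : K → ℝ) (y : K) : 0 < softmax z y :=
  div_pos (Real.exp_pos _) (sum_pos (fun k _ => Real.exp_pos (z k)) ⟨y, mem_univ y⟩)

lemma exists_pos_eq_mul_exp_of_softmax_add_log_eq {K : Type*} [Fintype K] [Nonempty K]
    (z w p : K → ℝ) (hw : ∀ k, 0 < w k) (hp : ∀ k, 0 ≤ p k)
    (h : ∀ y, softmax (fun k => z k + Real.log (w k)) y = w y * p y / ∑ k, w k * p k) :
    ∃ C > 0, ∀ y, p y = C * Real.exp (z y) := by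
  set S := ∑ k, Real.exp (z k + Real.log (w k))
  set T := ∑ k, w k * p k
  have hS : 0 < S := sum_pos (fun k _ => Real.exp_pos _) univ_nonempty
  have hT : 0 < T := by
    obtain ⟨y⟩ := ‹Nonempty K›
    -- `T = 0` would make the posterior `w y * p y / T` the junk value `0`, but softmax is positive.
    refine (sum_nonneg fun k _ => mul_nonneg (hw k).le (hp k)).lt_of_ne' fun hT => ?_
    have := softmax_pos (fun k => z k + Real.log (w k)) y
    rw [h y, show T = 0 from hT, div_zero] at this
    exact this.false
  refine ⟨T / S, div_pos hT hS, fun y => ?_⟩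
  have hy := h y
  rw [softmax_add_log_apply z w hw y, div_eq_div_iff hS.ne' hT.ne'] at hy
  field_simp
  apply mul_left_cancel₀ (hw y).ne'
  linear_combination -hy

lemma le_of_softmax_add_log_eq {K : Type*} [Fintype K]
    (z w p : K → ℝ) (hw : ∀ k, 0 < w k) (hp : ∀ k, 0 ≤ p k)
    (h : ∀ y, softmax (fun k => z k + Real.log (w k)) y = w y * p y / ∑ k, w k * p k)
    {y y' : K} (hz : z y ≤ z y') : p y ≤ p y' := by
  have : Nonempty K := ⟨y⟩
  obtain ⟨C, hC, hpC⟩ := exists_pos_eq_mul_exp_of_softmax_add_log_eq z w p hw hp h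
  rw [hpC, hpC]
  gcongr

section BalancedError

variable {X K : Type*} [Fintype X] [Fintype K] [DecidableEq K]

lemma sum_sum_filter_ne_eq_sum_sub {M : Type*} [AddCommGroup M] (μ : K → X → M) (c : X → K) :
    ∑ y, ∑ x ∈ univ.filter (fun x => c x ≠ y), μ y x = ∑ x, (∑ y, μ y x - μ (c x) x) := by
  calc ∑ y, ∑ x ∈ univ.filter (fun x => c x ≠ y), μ y x
      = ∑ x, ∑ y ∈ univ.filter (fun y => y ≠ c x), μ y x := by
        simp only [sum_filter]
        rw [sum_comm]
        simp_rw [ne_comm]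
    _ = ∑ x, (∑ y, μ y x - μ (c x) x) := by
        simp only [filter_ne', sum_erase_eq_sub (mem_univ _)]

lemma sum_sum_filter_ne_le_of_forall_le (μ : K → X → ℝ) {c c' : X → K}
    (h : ∀ x, μ (c x) x ≤ μ (c' x) x) :
    ∑ y, ∑ x ∈ univ.filter (fun x => c' x ≠ y), μ y x ≤
      ∑ y, ∑ x ∈ univ.filter (fun x => c x ≠ y), μ y x := by
  rw [sum_sum_filter_ne_eq_sum_sub, sum_sum_filter_ne_eq_sum_sub]
  exact sum_le_sum fun x _ => sub_le_sub_left (h x) _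

end BalancedError

theorem balanced_risk_minimizer_minimizes_balanced_error_general
    {X K : Type*} [Fintype X] [Fintype K]
    [DecidableEq K]
    (π : K → ℝ) (hπ0 : ∀ y, 0 < π y)
    (μ : K → X → ℝ)
    (hμ0 : ∀ y x, 0 < μ y x)
    (f : X → K → ℝ)
    (hf : ∀ x y, softmax (fun k => f x k + Real.log (π k)) y =
      π y * μ y x / ∑ k, π k * μ k x)
    (cstar : X → K)
    (hstar : ∀ x y, f x y ≤ f x (cstar x)) :
    ∀ c : X → K,
      (1 / (Fintype.card K : ℝ)) *
          ∑ y, ∑ x ∈ Finset.univ.filter (fun x => cstar x ≠ y), μ y x ≤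
        (1 / (Fintype.card K : ℝ)) *
          ∑ y, ∑ x ∈ Finset.univ.filter (fun x => c x ≠ y), μ y x := by
  intro c
  have hcstar : ∀ x, μ (c x) x ≤ μ (cstar x) x := fun x =>
    le_of_softmax_add_log_eq (f x) π (μ · x) hπ0 (fun k => (hμ0 k x).le) (hf x) (hstar x (c x))
  exact mul_le_mul_of_nonneg_left (sum_sum_filter_ne_le_of_forall_le μ hcstar) (by positivity)

/-- Lemma 1 of the paper (discrete setting): the argmax classifier of a scorer
`f` whose prior-adjusted softmax recovers the posterior
`π_y μ_y(x)/Σ_k π_k μ_k(x)` minimizes the balanced error, i.e., the average of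
the per-class error rates. -/
theorem balanced_risk_minimizer_minimizes_balanced_error
    {X K : Type*} [Fintype X] [Fintype K] [Nonempty X] [Nonempty K]
    [DecidableEq K]
    (π : K → ℝ) (hπ0 : ∀ y, 0 < π y) (hπ1 : ∑ y, π y = 1)
    (μ : K → X → ℝ)
    (hμ0 : ∀ y x, 0 < μ y x) (hμ1 : ∀ y, ∑ x, μ y x = 1)
    (f : X → K → ℝ)
    (hf : ∀ x y, softmax (fun k => f x k + Real.log (π k)) y =
      π y * μ y x / ∑ k, π k * μ k x)
    (cstar : X → K)
    (hstar : ∀ x y, f x y ≤ f x (cstar x)) :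
    ∀ c : X → K,
      (1 / (Fintype.card K : ℝ)) *
          ∑ y, ∑ x ∈ Finset.univ.filter (fun x => cstar x ≠ y), μ y x ≤
        (1 / (Fintype.card K : ℝ)) *
          ∑ y, ∑ x ∈ Finset.univ.filter (fun x => c x ≠ y), μ y x :=
  balanced_risk_minimizer_minimizes_balanced_error_general π hπ0 μ hμ0 f hf cstar hstar
end
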